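/- arXiv:1301.5125 — 3 statements merged into one kernel-verified Lean document; each statement's English description precedes it below -/
import Mathlib

section
/- If (V, H₁) and (V, H₂) are two complete interactions over a unital C*-algebra A with the same first map V, then H₁(1) = H₂(1); consequently H₁ = H₂, i.e. the map H in a complete interaction is uniquely determined by V via H(a) = V^{-1}(V(1)·a·V(1)) where V^{-1} is the inverse of the isomorphism V : H(1)AH(1) → V(A). -/
/-- An interaction over a (unital) C*-algebra `A`. -/
structure Interaction (A : Type*) [CStarAlgebra A] [PartialOrder A] [StarOrderedRing A] where
  V : A →L[ℂ] A
  H : A →L[ℂ] A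
  V_pos : ∀ a : A, 0 ≤ a → 0 ≤ V a
  H_pos : ∀ a : A, 0 ≤ a → 0 ≤ H a
  VHV : ∀ a : A, V (H (V a)) = V a
  HVH : ∀ a : A, H (V (H a)) = H a
  V_mul_left : ∀ a b : A, a ∈ Set.range H → V (a * b) = V a * V b
  V_mul_right : ∀ a b : A, b ∈ Set.range H → V (a * b) = V a * V b
  H_mul_left : ∀ a b : A, a ∈ Set.range V → H (a * b) = H a * H b
  H_mul_right : ∀ a b : A, b ∈ Set.range V → H (a * b) = H a * H b

/-- A complete interaction: `V(A)` and `H(A)` are (hereditary) corners. -/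
structure CompleteInteraction (A : Type*) [CStarAlgebra A] [PartialOrder A]
    [StarOrderedRing A] extends Interaction A where
  V_corner : Set.range ⇑V = Set.range (fun a : A => V 1 * a * V 1)
  H_corner : Set.range ⇑H = Set.range (fun a : A => H 1 * a * H 1)


/-!
`V` restricts to an isomorphism from the corner `H(1) A H(1) = H(A)` onto `V(A)`, with inverse
`H`, and `V(H(a)) = V(1) a V(1)`. If `(V, H₁)` and `(V, H₂)` are complete interactions, the
projections `P₁ = H₁(1)`, `P₂ = H₂(1)` both satisfy `V(Pᵢ) = V(1)`, so `P₁ P₂ P₁` and `P₁` have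
the same image under `V`; both lie in the corner `P₁ A P₁`, hence `P₁ P₂ P₁ = P₁`, and likewise
`P₂ P₁ P₂ = P₂`. For projections `p q p = p` means `p ≤ q`, so `P₁ = P₂`. Then `H₁(A) = H₂(A)`
and `H₁(a)`, `H₂(a)` are two preimages of `V(1) a V(1)` in this corner.
-/

lemma IsIdempotentElem.mul_mul_self_of_mem_range {R : Type*} [Semigroup R] {e x : R}
    (he : IsIdempotentElem e) (hx : x ∈ Set.range (fun a : R => e * a * e)) :
    e * x * e = x := by
  obtain ⟨a, rfl⟩ := hx
  simp only [← mul_assoc, he.eq]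
  rw [mul_assoc _ e e, he.eq]

namespace IsStarProjection

variable {A : Type*} [NonUnitalCStarAlgebra A] [PartialOrder A] [StarOrderedRing A] {p q : A}

lemma le_of_mul_mul_self_eq (hp : IsStarProjection p) (hq : IsStarProjection q)
    (h : p * q * p = p) : p ≤ q := by
  have hzero : star (q * p - p) * (q * p - p) = 0 :=
    calc star (q * p - p) * (q * p - p)
        = p * (q * q) * p - p * q * p - p * q * p + p * p := by
          rw [star_sub, star_mul, hp.isSelfAdjoint.star_eq, hq.isSelfAdjoint.star_eq]
          noncomm_ring
      _ = 0 := by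
          rw [hq.isIdempotentElem.eq, hp.isIdempotentElem.eq, h]
          abel
  rw [hp.le_iff_mul_eq_right hq, ← sub_eq_zero]
  exact (CStarRing.star_mul_self_eq_zero_iff _).mp hzero

end IsStarProjection

section

variable {A : Type*} [CStarAlgebra A] [PartialOrder A] [StarOrderedRing A]

namespace Interaction

variable (I : Interaction A)

lemma isIdempotentElem_V_one : IsIdempotentElem (I.V 1) := by
  have h := I.V_mul_right 1 (I.H (I.V 1)) ⟨_, rfl⟩
  rwa [one_mul, I.VHV, eq_comm] at h

lemma isIdempotentElem_H_one : IsIdempotentElem (I.H 1) := by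
  have h := I.H_mul_right 1 (I.V (I.H 1)) ⟨_, rfl⟩
  rwa [one_mul, I.HVH, eq_comm] at h

lemma isStarProjection_H_one : IsStarProjection (I.H 1) :=
  ⟨I.isIdempotentElem_H_one, IsSelfAdjoint.of_nonneg (I.H_pos 1 zero_le_one)⟩

lemma V_H_of_mem_range {x : A} (hx : x ∈ Set.range I.V) : I.V (I.H x) = x := by
  obtain ⟨b, rfl⟩ := hx
  exact I.VHV b

lemma H_V_of_mem_range {x : A} (hx : x ∈ Set.range I.H) : I.H (I.V x) = x := by
  obtain ⟨b, rfl⟩ := hx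
  exact I.HVH b

lemma injOn_V_range_H : Set.InjOn I.V (Set.range I.H) := fun x hx y hy hxy => by
  rw [← I.H_V_of_mem_range hx, hxy, I.H_V_of_mem_range hy]

end Interaction

namespace CompleteInteraction

variable (I : CompleteInteraction A)

lemma V_one_mul_mul_V_one {x : A} (hx : x ∈ Set.range I.V) : I.V 1 * x * I.V 1 = x :=
  I.isIdempotentElem_V_one.mul_mul_self_of_mem_range (I.V_corner ▸ hx)

lemma H_one_mul_mul_H_one {x : A} (hx : x ∈ Set.range I.H) : I.H 1 * x * I.H 1 = x :=
  I.isIdempotentElem_H_one.mul_mul_self_of_mem_range (I.H_corner ▸ hx)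

lemma H_one_mul_mul_H_one_mem_range (a : A) : I.H 1 * a * I.H 1 ∈ Set.range I.H :=
  I.H_corner ▸ ⟨a, rfl⟩

lemma V_H (a : A) : I.V (I.H a) = I.V 1 * a * I.V 1 :=
  calc I.V (I.H a) = I.V 1 * I.V (I.H a) * I.V 1 := (I.V_one_mul_mul_V_one ⟨_, rfl⟩).symm
    _ = I.V (I.H (I.V 1)) * I.V (I.H a) * I.V (I.H (I.V 1)) := by rw [I.VHV]
    _ = I.V (I.H (I.V 1) * I.H a * I.H (I.V 1)) := by
      rw [I.V_mul_right _ _ ⟨_, rfl⟩, I.V_mul_left _ _ ⟨_, rfl⟩]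
    _ = I.V (I.H (I.V 1 * a * I.V 1)) := by
      rw [I.H_mul_right _ _ ⟨_, rfl⟩, I.H_mul_left _ _ ⟨_, rfl⟩]
    _ = I.V 1 * a * I.V 1 := I.V_H_of_mem_range (I.V_corner ▸ ⟨a, rfl⟩)

lemma V_H_one : I.V (I.H 1) = I.V 1 := by
  rw [V_H, mul_one, I.isIdempotentElem_V_one.eq]

variable {I} {J : CompleteInteraction A}

lemma H_one_mul_mul_H_one_of_V_eq (hV : I.V = J.V) : I.H 1 * J.H 1 * I.H 1 = I.H 1 := by
  refine I.injOn_V_range_H (I.H_one_mul_mul_H_one_mem_range _) ⟨1, rfl⟩ ?_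
  rw [I.V_mul_right _ _ ⟨1, rfl⟩, I.V_mul_left _ _ ⟨1, rfl⟩, I.V_H_one, hV, J.V_H_one, ← hV,
    I.isIdempotentElem_V_one.eq, I.isIdempotentElem_V_one.eq]

lemma H_one_eq_of_V_eq (hV : I.V = J.V) : I.H 1 = J.H 1 :=
  le_antisymm
    (I.isStarProjection_H_one.le_of_mul_mul_self_eq J.isStarProjection_H_one
      (H_one_mul_mul_H_one_of_V_eq hV))
    (J.isStarProjection_H_one.le_of_mul_mul_self_eq I.isStarProjection_H_one
      (H_one_mul_mul_H_one_of_V_eq hV.symm))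

lemma H_eq_of_V_eq (hV : I.V = J.V) : I.H = J.H := by
  ext a
  have hJ : J.H a ∈ Set.range I.H := by
    rw [← J.H_one_mul_mul_H_one ⟨a, rfl⟩, ← H_one_eq_of_V_eq hV]
    exact I.H_one_mul_mul_H_one_mem_range _
  refine I.injOn_V_range_H ⟨a, rfl⟩ hJ ?_
  rw [V_H, hV, V_H]

end CompleteInteraction

end

/-- If `(V, H₁)` and `(V, H₂)` are two complete interactions over a unital C*-algebra `A`
with the same first map `V`, then `H₁(1) = H₂(1)` and consequently `H₁ = H₂`: the map `H`
is uniquely determined by `V`, via `H(a) = V⁻¹(V(1)·a·V(1))` (expressed below by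
`V(H(a)) = V(1)·a·V(1)` together with `H(a)` lying in the corner `H(1)·A·H(1)` on which
`V` is injective). -/
theorem complete_interaction_H_unique {A : Type*} [CStarAlgebra A] [PartialOrder A]
    [StarOrderedRing A] (I₁ I₂ : CompleteInteraction A) (hV : I₁.V = I₂.V) :
    I₁.H 1 = I₂.H 1 ∧ I₁.H = I₂.H ∧
    (∀ a : A, I₁.V (I₁.H a) = I₁.V 1 * a * I₁.V 1 ∧
      I₁.H a = I₁.H 1 * I₁.H a * I₁.H 1) :=
  ⟨CompleteInteraction.H_one_eq_of_V_eq hV, CompleteInteraction.H_eq_of_V_eq hV,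
    fun a => ⟨I₁.V_H a, (I₁.H_one_mul_mul_H_one ⟨a, rfl⟩).symm⟩⟩
end

section
/- Let E be a finite directed graph and P the associated partially-stochastic matrix (p_{v,w} = A_E(v,w)/n_w when A_E(v,w) ≠ 0, else 0). Then every power P^n (n ≥ 1) is partially-stochastic if and only if for every n, any two paths in E of the same length n with the same range either both start at source vertices or both start at non-source vertices. -/
/-- A finite directed graph `E = (E⁰, E¹, r, s)`. -/
structure FinGraph where
  V : Type
  E : Type
  [fV : Fintype V]
  [fE : Fintype E]
  [dV : DecidableEq V]
  [dE : DecidableEq E]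
  s : E → V
  r : E → V

attribute [instance] FinGraph.fV FinGraph.fE FinGraph.dV FinGraph.dE

/-- A path of length `n` in the graph `G`: `n+1` vertices joined by `n` consecutive edges. -/
structure GPath (G : FinGraph) (n : ℕ) where
  vert : Fin (n + 1) → G.V
  edge : Fin n → G.E
  src_eq : ∀ i : Fin n, G.s (edge i) = vert i.castSucc
  rng_eq : ∀ i : Fin n, G.r (edge i) = vert i.succ

namespace GPath
variable {G : FinGraph} {n : ℕ}

/-- The source (initial vertex) of a path. -/
def src (p : GPath G n) : G.V := p.vert 0

/-- The range (final vertex) of a path. -/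
def rng (p : GPath G n) : G.V := p.vert (Fin.last n)

end GPath

/-- The number of edges with range `v`. -/
def nIn (G : FinGraph) (v : G.V) : ℕ := (Finset.univ.filter (fun e => G.r e = v)).card

/-- The matrix `P` with `p_{v,w} = A_E(v,w)/n_w` (equal to `0` when `A_E(v,w) = 0`). -/
noncomputable def stochMatrix (G : FinGraph) : Matrix G.V G.V ℝ :=
  fun v w => ((Finset.univ.filter (fun e => G.s e = v ∧ G.r e = w)).card : ℝ) / (nIn G w : ℝ)

/-- A nonnegative matrix is partially stochastic if every nonzero column sums to `1`. -/
def PartiallyStochastic {V : Type} [Fintype V] (M : Matrix V V ℝ) : Prop :=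
  ∀ w : V, (∃ v, M v w ≠ 0) → ∑ v, M v w = 1

/-!
The argument works for any entrywise nonnegative partially stochastic matrix `M`. Its column
sums are at most one, so for `x ≤ 1` the sum `∑ u, x u * M u w` equals one only if column `w` is
nonzero and `x u = 1` wherever `M u w ≠ 0`. Taking for `x` the column sums of `M ^ n`, induction
shows that the column sum of `M ^ n` at `w` is one exactly when every `u` with `(M ^ k) u w ≠ 0`
for some `k < n` has a nonzero column. For `M = stochMatrix G`, `(M ^ n) u w ≠ 0` means that a
path of length `n` runs from `u` to `w`, and column `u` is nonzero iff `u` is not a source.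
-/

namespace Matrix

variable {R : Type*} [Semiring R] {l m n : Type*} [Fintype m]

theorem sum_pow_succ_apply [DecidableEq m] (M : Matrix m m R) (k : ℕ) (j : m) :
    ∑ i, (M ^ (k + 1)) i j = ∑ l, (∑ i, (M ^ k) i l) * M l j := by
  simp only [pow_succ, mul_apply, Finset.sum_mul]
  exact Finset.sum_comm

variable [PartialOrder R] [IsOrderedRing R] [NoZeroDivisors R]

theorem mul_apply_ne_zero_iff {A : Matrix l m R} {B : Matrix m n R}
    (hA : ∀ i j, 0 ≤ A i j) (hB : ∀ i j, 0 ≤ B i j) (i : l) (k : n) :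
    (A * B) i k ≠ 0 ↔ ∃ j, A i j ≠ 0 ∧ B j k ≠ 0 := by
  rw [mul_apply, Ne, Finset.sum_eq_zero_iff_of_nonneg fun j _ => mul_nonneg (hA i j) (hB j k)]
  simp

theorem pow_succ_apply_ne_zero_iff [DecidableEq m] {M : Matrix m m R}
    (hM : ∀ i j, 0 ≤ M i j) (k : ℕ) (i j : m) :
    (M ^ (k + 1)) i j ≠ 0 ↔ ∃ l, (M ^ k) i l ≠ 0 ∧ M l j ≠ 0 := by
  rw [pow_succ, mul_apply_ne_zero_iff (pow_apply_nonneg hM k) hM]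

theorem exists_pow_apply_ne_zero_of_lt [DecidableEq m] {M : Matrix m m R}
    (hM : ∀ i j, 0 ≤ M i j) {n k : ℕ} {i j : m} (h : (M ^ n) i j ≠ 0) (hk : k < n) :
    ∃ l, (∃ i', M i' l ≠ 0) ∧ (M ^ k) l j ≠ 0 := by
  obtain ⟨d, rfl⟩ : ∃ d, n = d + 1 + k := ⟨n - k - 1, by omega⟩
  rw [pow_add, mul_apply_ne_zero_iff (pow_apply_nonneg hM _) (pow_apply_nonneg hM _)] at h
  obtain ⟨l, hil, hlj⟩ := h
  obtain ⟨i', -, hi'l⟩ := (pow_succ_apply_ne_zero_iff hM d i l).mp hil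
  exact ⟨l, ⟨i', hi'l⟩, hlj⟩

end Matrix

namespace PartiallyStochastic

variable {V : Type} [Fintype V] {M : Matrix V V ℝ}

theorem sum_apply_le_one (hPS : PartiallyStochastic M) (w : V) : ∑ v, M v w ≤ 1 := by
  by_cases hw : ∃ v, M v w ≠ 0
  · exact (hPS w hw).le
  · simp only [ne_eq, not_exists, not_not] at hw
    simp [hw]

theorem sum_apply_eq_one_iff (hPS : PartiallyStochastic M) (w : V) :
    ∑ v, M v w = 1 ↔ ∃ v, M v w ≠ 0 := by
  refine ⟨fun h => ?_, hPS w⟩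
  by_contra! hw
  simp [hw] at h

theorem sum_mul_apply_le_one (hM : ∀ i j, 0 ≤ M i j) (hPS : PartiallyStochastic M)
    {x : V → ℝ} (hx : ∀ v, x v ≤ 1) (w : V) : ∑ v, x v * M v w ≤ 1 :=
  calc ∑ v, x v * M v w ≤ ∑ v, M v w :=
        Finset.sum_le_sum fun v _ => mul_le_of_le_one_left (hM v w) (hx v)
    _ ≤ 1 := hPS.sum_apply_le_one w

theorem sum_mul_apply_eq_one_iff (hM : ∀ i j, 0 ≤ M i j) (hPS : PartiallyStochastic M)
    {x : V → ℝ} (hx : ∀ v, x v ≤ 1) (w : V) :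
    ∑ v, x v * M v w = 1 ↔ (∃ v, M v w ≠ 0) ∧ ∀ v, M v w ≠ 0 → x v = 1 := by
  have hle : ∀ v ∈ Finset.univ, x v * M v w ≤ M v w :=
    fun v _ => mul_le_of_le_one_left (hM v w) (hx v)
  rw [← hPS.sum_apply_eq_one_iff]
  constructor
  · intro h
    have hcol : ∑ v, M v w = 1 := le_antisymm (hPS.sum_apply_le_one w)
      (h ▸ Finset.sum_le_sum hle)
    refine ⟨hcol, fun v hv => ?_⟩
    have hv' := (Finset.sum_eq_sum_iff_of_le hle).mp (h.trans hcol.symm) v (Finset.mem_univ v)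
    exact mul_left_eq_self₀.mp hv' |>.resolve_right hv
  · rintro ⟨hcol, hx1⟩
    rw [← hcol]
    refine Finset.sum_congr rfl fun v _ => ?_
    by_cases hv : M v w = 0
    · simp [hv]
    · simp [hx1 v hv]

variable [DecidableEq V]

theorem sum_pow_apply_le_one (hM : ∀ i j, 0 ≤ M i j) (hPS : PartiallyStochastic M) (n : ℕ)
    (w : V) : ∑ v, (M ^ n) v w ≤ 1 := by
  induction n generalizing w with
  | zero => simp [Matrix.one_apply]
  | succ n ih => rw [Matrix.sum_pow_succ_apply]; exact hPS.sum_mul_apply_le_one hM ih w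

theorem sum_pow_apply_eq_one_iff (hM : ∀ i j, 0 ≤ M i j) (hPS : PartiallyStochastic M) (n : ℕ)
    (w : V) : ∑ v, (M ^ n) v w = 1 ↔ ∀ k < n, ∀ u, (M ^ k) u w ≠ 0 → ∃ v, M v u ≠ 0 := by
  induction n generalizing w with
  | zero => simp [Matrix.one_apply]
  | succ n ih =>
    rw [Matrix.sum_pow_succ_apply, hPS.sum_mul_apply_eq_one_iff hM (sum_pow_apply_le_one hM hPS n),
      Nat.forall_lt_succ_left]
    simp only [ih, Matrix.pow_succ_apply_ne_zero_iff hM]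
    refine and_congr (by simp [Matrix.one_apply]) ⟨?_, ?_⟩
    · rintro h k hk u ⟨l, hul, hlw⟩
      exact h l hlw k hk u hul
    · intro h l hlw k hk u hul
      exact h k hk u ⟨l, hul, hlw⟩

end PartiallyStochastic

theorem partiallyStochastic_pow_iff {V : Type} [Fintype V] [DecidableEq V] {M : Matrix V V ℝ}
    (hM : ∀ i j, 0 ≤ M i j) (hPS : PartiallyStochastic M) :
    (∀ n, 1 ≤ n → PartiallyStochastic (M ^ n)) ↔
      ∀ n u u' w, (M ^ n) u w ≠ 0 → (M ^ n) u' w ≠ 0 →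
        ((∃ v, M v u ≠ 0) ↔ ∃ v, M v u' ≠ 0) := by
  constructor
  · intro h n
    suffices key : ∀ u u' w, (M ^ n) u w ≠ 0 → (M ^ n) u' w ≠ 0 →
        (∃ v, M v u ≠ 0) → ∃ v, M v u' ≠ 0 from
      fun u u' w hu hu' => ⟨key u u' w hu hu', key u' u w hu' hu⟩
    rintro u u' w hu hu' ⟨v, hvu⟩
    have hvw : (M ^ (n + 1)) v w ≠ 0 := by
      rw [pow_succ', Matrix.mul_apply_ne_zero_iff hM (Matrix.pow_apply_nonneg hM n)]
      exact ⟨u, hvu, hu⟩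
    have hcol := h (n + 1) n.succ_pos w ⟨v, hvw⟩
    exact (hPS.sum_pow_apply_eq_one_iff hM (n + 1) w).mp hcol n n.lt_succ_self u' hu'
  · rintro h n - w ⟨v, hvw⟩
    rw [hPS.sum_pow_apply_eq_one_iff hM]
    intro k hk u huw
    obtain ⟨u', hu', hu'w⟩ := Matrix.exists_pow_apply_ne_zero_of_lt hM hvw hk
    exact (h k u' u w hu'w huw).mp hu'

namespace GPath

variable {G : FinGraph} {n : ℕ}

def nil (v : G.V) : GPath G 0 where
  vert _ := v
  edge := Fin.elim0
  src_eq i := i.elim0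
  rng_eq i := i.elim0

def snoc (p : GPath G n) (e : G.E) (h : G.s e = p.rng) : GPath G (n + 1) where
  vert := Fin.snoc p.vert (G.r e)
  edge := Fin.snoc p.edge e
  src_eq := Fin.lastCases (by simpa [rng] using h) fun i => by simpa using p.src_eq i
  rng_eq := Fin.lastCases (by simp) fun i => by
    rw [Fin.snoc_castSucc, Fin.succ_castSucc, Fin.snoc_castSucc]
    exact p.rng_eq i

def init (p : GPath G (n + 1)) : GPath G n where
  vert := Fin.init p.vert
  edge := Fin.init p.edge
  src_eq i := p.src_eq i.castSucc
  rng_eq i := by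
    simp only [Fin.init]
    rw [← Fin.succ_castSucc]
    exact p.rng_eq i.castSucc

theorem exists_zero_iff {v w : G.V} : (∃ μ : GPath G 0, μ.src = v ∧ μ.rng = w) ↔ v = w :=
  ⟨fun ⟨_, hv, hw⟩ => hv.symm.trans hw, fun h => ⟨nil v, rfl, h⟩⟩

theorem exists_succ_iff {v w : G.V} :
    (∃ μ : GPath G (n + 1), μ.src = v ∧ μ.rng = w) ↔
      ∃ u, (∃ μ : GPath G n, μ.src = v ∧ μ.rng = u) ∧ ∃ e, G.s e = u ∧ G.r e = w := by
  constructor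
  · rintro ⟨μ, rfl, rfl⟩
    refine ⟨_, ⟨μ.init, rfl, rfl⟩, μ.edge (Fin.last n), (μ.src_eq _).symm ▸ rfl, ?_⟩
    simp [rng, μ.rng_eq]
  · rintro ⟨u, ⟨μ, rfl, rfl⟩, e, hs, rfl⟩
    exact ⟨μ.snoc e hs, by simp [snoc, src], by simp [snoc, rng]⟩

end GPath

section stochMatrix

variable (G : FinGraph)

theorem stochMatrix_nonneg (v w : G.V) : 0 ≤ stochMatrix G v w := by
  unfold stochMatrix
  positivity

variable {G}

theorem stochMatrix_ne_zero_iff {v w : G.V} :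
    stochMatrix G v w ≠ 0 ↔ ∃ e, G.s e = v ∧ G.r e = w := by
  constructor
  · intro h
    by_contra! hvw
    simp [stochMatrix, Finset.filter_false_of_mem fun e _ => not_and.mpr (hvw e)] at h
  · rintro ⟨e, rfl, rfl⟩
    have hnum : 0 < (Finset.univ.filter fun e' => G.s e' = G.s e ∧ G.r e' = G.r e).card :=
      Finset.card_pos.mpr ⟨e, by simp⟩
    have hden : 0 < nIn G (G.r e) := Finset.card_pos.mpr ⟨e, by simp⟩
    unfold stochMatrix
    positivity

theorem exists_stochMatrix_ne_zero_iff {w : G.V} :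
    (∃ v, stochMatrix G v w ≠ 0) ↔ ∃ e, G.r e = w := by
  simp [stochMatrix_ne_zero_iff]

variable (G)

theorem partiallyStochastic_stochMatrix : PartiallyStochastic (stochMatrix G) := by
  rintro w hw
  obtain ⟨e, he⟩ := exists_stochMatrix_ne_zero_iff.mp hw
  have hfib : ∑ v, (Finset.univ.filter fun e => G.s e = v ∧ G.r e = w).card = nIn G w := by
    rw [nIn, Finset.card_eq_sum_card_fiberwise fun e _ => Finset.mem_univ (G.s e)]
    simp only [Finset.filter_filter, and_comm]
  have hden : (nIn G w : ℝ) ≠ 0 := Nat.cast_ne_zero.mpr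
    (Finset.card_ne_zero_of_mem (Finset.mem_filter.mpr ⟨Finset.mem_univ e, he⟩))
  simp only [stochMatrix, ← Finset.sum_div, ← Nat.cast_sum, hfib, div_self hden]

theorem pow_stochMatrix_apply_ne_zero_iff (n : ℕ) (v w : G.V) :
    (stochMatrix G ^ n) v w ≠ 0 ↔ ∃ μ : GPath G n, μ.src = v ∧ μ.rng = w := by
  induction n generalizing w with
  | zero => simp [Matrix.one_apply, GPath.exists_zero_iff]
  | succ n ih =>
    simp only [Matrix.pow_succ_apply_ne_zero_iff (stochMatrix_nonneg G), GPath.exists_succ_iff,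
      ih, stochMatrix_ne_zero_iff]

end stochMatrix

/-- For a finite directed graph `E` with associated partially-stochastic matrix `P`,
every power `P^n` (`n ≥ 1`) is partially stochastic if and only if any two paths of the
same length with the same range either both start at source vertices or both start at
non-source vertices. -/
theorem stochMatrix_all_pows_partiallyStochastic_iff (G : FinGraph) :
    (∀ n : ℕ, 1 ≤ n → PartiallyStochastic (stochMatrix G ^ n)) ↔
      ∀ (n : ℕ) (μ ν : GPath G n), GPath.rng μ = GPath.rng ν →
        ((∃ e : G.E, G.r e = GPath.src μ) ↔ (∃ e : G.E, G.r e = GPath.src ν)) := by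
  rw [partiallyStochastic_pow_iff (stochMatrix_nonneg G) (partiallyStochastic_stochMatrix G)]
  simp only [pow_stochMatrix_apply_ne_zero_iff, exists_stochMatrix_ne_zero_iff]
  constructor
  · intro h n μ ν hμν
    exact h n _ _ _ ⟨μ, rfl, hμν⟩ ⟨ν, rfl, rfl⟩
  · rintro h n _ _ w ⟨μ, rfl, rfl⟩ ⟨ν, rfl, hν⟩
    exact h n μ ν hν.symm
end

section
/- Let E be a finite directed graph, {p_v}, {s_e} the universal Cuntz-Krieger family in C*(E), and let V(1) := ss* where s = Σ_{e∈E¹} (1/√n_{r(e)}) s_e. Then V(1) is central in the core AF-algebra F_E = closed span{s_μ s_ν* : μ,ν paths of equal length} if and only if the range map r : E¹ → E⁰ is injective. In particular V(1) = Σ_{v ∈ r(E¹)} (1/n_v) Σ_{e,f ∈ r^{-1}(v)} s_e s_f*, and centrality forces, for any two edges g, h with r(g) = r(h) = v, the identity Σ_{e ∈ r^{-1}(v)} s_e s_h* = Σ_{f ∈ r^{-1}(v)} s_g s_f* and hence g = h. -/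
/-- A Cuntz–Krieger `E`-family in a C*-algebra `B`: mutually orthogonal nonzero
projections `{P_v}` and partial isometries `{S_e}` with `S_e* S_e = P_{r(e)}` and
`P_v = Σ_{s(e)=v} S_e S_e*` for every non-sink `v`. -/
structure CKFamily (G : FinGraph) (B : Type*) [CStarAlgebra B] where
  P : G.V → B
  S : G.E → B
  P_ne : ∀ v : G.V, P v ≠ 0
  P_sa : ∀ v : G.V, star (P v) = P v
  P_idem : ∀ v : G.V, P v * P v = P v
  P_orth : ∀ v w : G.V, v ≠ w → P v * P w = 0
  SS : ∀ e : G.E, star (S e) * S e = P (G.r e)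
  CK : ∀ v : G.V, (∃ e : G.E, G.s e = v) →
    P v = ∑ e ∈ Finset.univ.filter (fun e => G.s e = v), S e * star (S e)

/-- The partial isometry `S_μ = S_{μ₁} ⋯ S_{μ_n}` associated to a path `μ`. -/
def CKFamily.SP {G : FinGraph} {B : Type*} [CStarAlgebra B] (F : CKFamily G B)
    {n : ℕ} (p : GPath G n) : B :=
  (List.ofFn (fun i : Fin n => F.S (p.edge i))).prod

/-!
The range projections `s_e s_e*` sum to the projection `Σ_{v ∈ s(E¹)} p_v`, so in a C*-algebra
they are mutually orthogonal; hence `s_e* s_f = 0` for `e ≠ f`, and `s_e s_f* = 0` unless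
`r(e) = r(f)`. With `t_v = Σ_{r(e)=v} s_e` this gives `V(1) = Σ_v n_v⁻¹ t_v t_v*`.
If `r` is injective, `V(1) = Σ_e s_e s_e*`, which fixes every `s_μ` of positive length from the
left, so it commutes with every `s_μ s_ν*` and therefore with their closed span.
Conversely, for `r(g) = r(h) = v` one computes `V(1) s_g s_h* = n_v⁻¹ t_v s_h*` and
`s_g s_h* V(1) = n_v⁻¹ s_g t_v*`; compressing the equality `t_v s_h* = s_g t_v*` by `s_h* · s_h`
turns its left side into `p_v ≠ 0` and its right side into `0` unless `g = h`.
-/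

open Finset

theorem mul_star_mul_self_of_isStarProjection {E : Type*} [NonUnitalNormedRing E] [StarRing E]
    [CStarRing E] {a : E} (h : IsStarProjection (star a * a)) : a * (star a * a) = a := by
  have hp : star a * a * (star a * a) = star a * a := h.isIdempotentElem.eq
  rw [← sub_eq_zero, ← CStarRing.star_mul_self_eq_zero_iff]
  calc star (a * (star a * a) - a) * (a * (star a * a) - a)
      = star a * a * (star a * a) * (star a * a) - star a * a * (star a * a)
          - star a * a * (star a * a) + star a * a := by
        simp only [star_sub, star_mul, star_star]; noncomm_ring
    _ = 0 := by rw [hp, hp]; abel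

theorem IsStarProjection.sum {ι R : Type*} [NonUnitalNonAssocSemiring R] [StarRing R]
    {s : Finset ι} {p : ι → R} (hp : ∀ i ∈ s, IsStarProjection (p i))
    (horth : (s : Set ι).Pairwise fun i j => p i * p j = 0) :
    IsStarProjection (∑ i ∈ s, p i) := by
  classical
  induction s using Finset.induction_on with
  | empty => rw [sum_empty]; exact .zero _
  | insert a s ha ih =>
    rw [sum_insert ha]
    refine (hp a (mem_insert_self a s)).add
      (ih (fun i hi => hp i (mem_insert_of_mem hi)) (horth.mono (by simp))) ?_
    rw [mul_sum]
    exact sum_eq_zero fun i hi =>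
      horth (by simp) (by simp [hi]) (by rintro rfl; exact ha hi)

theorem IsStarProjection.mul_eq_zero_of_isStarProjection_sum {ι A : Type*}
    [NonUnitalCStarAlgebra A] [PartialOrder A] [StarOrderedRing A]
    {s : Finset ι} {p : ι → A} (hp : ∀ i ∈ s, IsStarProjection (p i))
    (hsum : IsStarProjection (∑ i ∈ s, p i)) {i j : ι} (hi : i ∈ s) (hj : j ∈ s) (hij : i ≠ j) :
    p i * p j = 0 := by
  classical
  have hnonneg : ∀ k ∈ s, 0 ≤ p k := fun k hk => (hp k hk).nonneg
  have hcompl : IsStarProjection (∑ k ∈ s, p k - p j) :=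
    ((hp j hj).le_iff_sub hsum).mp (single_le_sum hnonneg hj)
  have hi_le : p i ≤ ∑ k ∈ s, p k - p j := by
    rw [← sum_erase_eq_sub hj]
    exact single_le_sum (fun k hk => hnonneg k (mem_of_mem_erase hk)) (mem_erase.mpr ⟨hij, hi⟩)
  have h := ((hp i hi).le_iff_mul_eq_left hcompl).mp hi_le
  rwa [mul_sub, ((hp i hi).le_iff_mul_eq_left hsum).mp (single_le_sum hnonneg hi),
    sub_eq_self] at h

theorem closure_span_subset_centralizer {R A : Type*} [CommSemiring R] [Semiring A]
    [Algebra R A] [TopologicalSpace A] [SeparatelyContinuousMul A] [T2Space A] {s t : Set A}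
    (h : s ⊆ Set.centralizer t) : closure (Submodule.span R s : Set A) ⊆ Set.centralizer t :=
  closure_minimal (Submodule.span_le (p := (Subalgebra.centralizer R t).toSubmodule).mpr h)
    (Set.isClosed_centralizer t)

def GPath.ofEdge {G : FinGraph} (e : G.E) : GPath G 1 where
  vert := ![G.s e, G.r e]
  edge := fun _ => e
  src_eq i := by fin_cases i; rfl
  rng_eq i := by fin_cases i; rfl

/-- `n_v^{-1/2}`, the coefficient of `s_e` in `s` when `r(e) = v`. -/
noncomputable def invSqrtIn (G : FinGraph) (v : G.V) : ℂ := ((Real.sqrt (nIn G v) : ℝ) : ℂ)⁻¹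

theorem star_invSqrtIn (G : FinGraph) (v : G.V) : star (invSqrtIn G v) = invSqrtIn G v := by
  simp [invSqrtIn]

theorem invSqrtIn_mul_self (G : FinGraph) (v : G.V) :
    invSqrtIn G v * invSqrtIn G v = (nIn G v : ℂ)⁻¹ := by
  rw [invSqrtIn, ← mul_inv, ← Complex.ofReal_mul, Real.mul_self_sqrt (Nat.cast_nonneg _),
    Complex.ofReal_natCast]

namespace CKFamily

variable {G : FinGraph} {B : Type*} [CStarAlgebra B] (F : CKFamily G B)

theorem SP_ofEdge (e : G.E) : F.SP (GPath.ofEdge e) = F.S e := by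
  simp [SP, GPath.ofEdge]

theorem isStarProjection_P (v : G.V) : IsStarProjection (F.P v) := ⟨F.P_idem v, F.P_sa v⟩

theorem S_mul_P (e : G.E) : F.S e * F.P (G.r e) = F.S e := by
  simpa only [F.SS] using
    mul_star_mul_self_of_isStarProjection (a := F.S e) (by rw [F.SS]; exact F.isStarProjection_P _)

theorem P_mul_star_S (e : G.E) : F.P (G.r e) * star (F.S e) = star (F.S e) := by
  simpa [star_mul, F.P_sa] using congr(star $(F.S_mul_P e))

theorem isStarProjection_S_mul_star_S (e : G.E) : IsStarProjection (F.S e * star (F.S e)) where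
  isIdempotentElem := by
    rw [IsIdempotentElem, mul_assoc, ← mul_assoc (star _), F.SS, P_mul_star_S]
  isSelfAdjoint := IsSelfAdjoint.mul_star_self _

theorem sum_S_mul_star_S :
    ∑ e, F.S e * star (F.S e) = ∑ v ∈ univ.filter (fun v => ∃ e, G.s e = v), F.P v := by
  rw [← sum_fiberwise univ G.s, ← sum_filter_of_ne (p := fun v => ∃ e, G.s e = v)]
  · exact sum_congr rfl fun v hv => (F.CK v (mem_filter.mp hv).2).symm
  · intro v _ hne
    obtain ⟨e, he, -⟩ := exists_ne_zero_of_sum_ne_zero hne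
    exact ⟨e, (mem_filter.mp he).2⟩

theorem isStarProjection_sum_S_mul_star_S : IsStarProjection (∑ e, F.S e * star (F.S e)) := by
  rw [sum_S_mul_star_S]
  exact IsStarProjection.sum (fun v _ => F.isStarProjection_P v) fun v _ w _ => F.P_orth v w

theorem star_S_mul_S_of_ne {e f : G.E} (hef : e ≠ f) : star (F.S e) * F.S f = 0 := by
  -- `B` carries no order instance; the positivity argument runs in the spectral order.
  let := CStarAlgebra.spectralOrder B
  have := CStarAlgebra.spectralOrderedRing B
  have hq : F.S e * star (F.S e) * (F.S f * star (F.S f)) = 0 :=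
    IsStarProjection.mul_eq_zero_of_isStarProjection_sum
      (fun g _ => F.isStarProjection_S_mul_star_S g) F.isStarProjection_sum_S_mul_star_S
      (mem_univ e) (mem_univ f) hef
  calc star (F.S e) * F.S f
      = star (F.S e) * (F.S e * star (F.S e) * (F.S f * star (F.S f))) * F.S f := by
        rw [← mul_assoc, ← mul_assoc, ← mul_assoc (star _), F.SS, P_mul_star_S, mul_assoc,
          mul_assoc, F.SS, S_mul_P]
    _ = 0 := by rw [hq, mul_zero, zero_mul]

theorem star_S_mul_S (e f : G.E) :
    star (F.S e) * F.S f = if e = f then F.P (G.r f) else 0 := by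
  split_ifs with h
  · rw [h, F.SS]
  · exact F.star_S_mul_S_of_ne h

theorem S_mul_star_S_of_r_ne {e f : G.E} (h : G.r e ≠ G.r f) : F.S e * star (F.S f) = 0 := by
  rw [← F.S_mul_P e, ← F.P_mul_star_S f, mul_assoc, ← mul_assoc (F.P _), F.P_orth _ _ h,
    zero_mul, mul_zero]

/-- `t_v = Σ_{r(e)=v} s_e`. -/
def fiberSum (v : G.V) : B := ∑ e ∈ univ.filter (fun e => G.r e = v), F.S e

theorem star_fiberSum_mul_S (v : G.V) (g : G.E) :
    star (F.fiberSum v) * F.S g = if G.r g = v then F.P v else 0 := by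
  simp only [fiberSum, star_sum, sum_mul, star_S_mul_S, sum_ite_eq', mem_filter, mem_univ,
    true_and]
  split_ifs with h
  · rw [h]
  · rfl

theorem star_S_mul_fiberSum (h : G.E) : star (F.S h) * F.fiberSum (G.r h) = F.P (G.r h) := by
  simpa [star_mul, F.P_sa] using congr(star $(F.star_fiberSum_mul_S (G.r h) h))

theorem fiberSum_mul_P (v : G.V) : F.fiberSum v * F.P v = F.fiberSum v := by
  rw [fiberSum, sum_mul]
  exact sum_congr rfl fun e he => by rw [← (mem_filter.mp he).2, S_mul_P]

theorem fiberSum_mul_star_fiberSum_of_ne {v w : G.V} (hvw : v ≠ w) :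
    F.fiberSum v * star (F.fiberSum w) = 0 := by
  rw [fiberSum, fiberSum, star_sum, sum_mul_sum]
  exact sum_eq_zero fun e he => sum_eq_zero fun f hf => F.S_mul_star_S_of_r_ne
    (by rwa [(mem_filter.mp he).2, (mem_filter.mp hf).2])

/-- The projection `V(1) = s s*`, `s = Σ_e n_{r(e)}^{-1/2} s_e`. -/
noncomputable def vOne : B :=
  (∑ e, invSqrtIn G (G.r e) • F.S e) * star (∑ e, invSqrtIn G (G.r e) • F.S e)

theorem isSelfAdjoint_vOne : IsSelfAdjoint F.vOne := IsSelfAdjoint.mul_star_self _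

theorem vOne_eq_sum_fiberSum : F.vOne = ∑ v ∈ univ.filter (fun v => ∃ e, G.r e = v),
    (nIn G v : ℂ)⁻¹ • (F.fiberSum v * star (F.fiberSum v)) := by
  have hs : ∑ e, invSqrtIn G (G.r e) • F.S e = ∑ v, invSqrtIn G v • F.fiberSum v := by
    rw [← sum_fiberwise univ G.r]
    refine sum_congr rfl fun v _ => ?_
    rw [fiberSum, smul_sum]
    exact sum_congr rfl fun e he => by rw [(mem_filter.mp he).2]
  rw [vOne, hs, star_sum, sum_mul_sum, sum_filter_of_ne]
  · refine sum_congr rfl fun v _ => ?_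
    rw [sum_eq_single v, star_smul, star_invSqrtIn, smul_mul_smul_comm, invSqrtIn_mul_self]
    · intro w _ hwv
      rw [star_smul, smul_mul_smul_comm, F.fiberSum_mul_star_fiberSum_of_ne hwv.symm, smul_zero]
    · simp
  · intro v _ hne
    by_contra hv
    simp only [not_exists] at hv
    simp [fiberSum, hv] at hne

theorem vOne_eq : F.vOne = ∑ v ∈ univ.filter (fun v => ∃ e, G.r e = v),
    (nIn G v : ℂ)⁻¹ • ∑ e ∈ univ.filter (fun e => G.r e = v),
      ∑ f ∈ univ.filter (fun f => G.r f = v), F.S e * star (F.S f) := by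
  simp only [vOne_eq_sum_fiberSum, fiberSum, star_sum, sum_mul_sum]

theorem vOne_mul_S (g : G.E) :
    F.vOne * F.S g = (nIn G (G.r g) : ℂ)⁻¹ • F.fiberSum (G.r g) := by
  rw [vOne_eq_sum_fiberSum, sum_mul, sum_eq_single_of_mem (G.r g) (by simp)]
  · rw [smul_mul_assoc, mul_assoc, star_fiberSum_mul_S, if_pos rfl, fiberSum_mul_P]
  · intro v _ hv
    rw [smul_mul_assoc, mul_assoc, star_fiberSum_mul_S, if_neg (Ne.symm hv), mul_zero, smul_zero]

theorem star_S_mul_vOne (h : G.E) :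
    star (F.S h) * F.vOne = (nIn G (G.r h) : ℂ)⁻¹ • star (F.fiberSum (G.r h)) := by
  simpa [star_mul, F.isSelfAdjoint_vOne.star_eq] using congr(star $(F.vOne_mul_S h))

theorem fiberSum_mul_star_S_eq_of_commute {g h : G.E} (hgh : G.r g = G.r h)
    (hc : F.vOne * (F.S g * star (F.S h)) = F.S g * star (F.S h) * F.vOne) :
    F.fiberSum (G.r h) * star (F.S h) = F.S g * star (F.fiberSum (G.r h)) := by
  have hn : (nIn G (G.r h) : ℂ) ≠ 0 := by
    exact_mod_cast card_ne_zero_of_mem (by simp : h ∈ univ.filter (fun e => G.r e = G.r h))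
  rw [← mul_assoc, vOne_mul_S, mul_assoc, star_S_mul_vOne, hgh, smul_mul_assoc,
    mul_smul_comm] at hc
  exact smul_right_injective B (inv_ne_zero hn) hc

theorem eq_of_fiberSum_mul_star_S_eq {g h : G.E}
    (heq : F.fiberSum (G.r h) * star (F.S h) = F.S g * star (F.fiberSum (G.r h))) : g = h := by
  by_contra hne
  have hL : star (F.S h) * (F.fiberSum (G.r h) * star (F.S h)) * F.S h = F.P (G.r h) := by
    rw [← mul_assoc, star_S_mul_fiberSum, mul_assoc, F.SS, F.P_idem]
  have hR : star (F.S h) * (F.S g * star (F.fiberSum (G.r h))) * F.S h = 0 := by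
    rw [← mul_assoc, F.star_S_mul_S_of_ne (Ne.symm hne), zero_mul, zero_mul]
  exact F.P_ne _ (by rw [← hL, heq, hR])

theorem vOne_eq_sum_S_mul_star_S_of_injective (hr : Function.Injective G.r) :
    F.vOne = ∑ e, F.S e * star (F.S e) := by
  have himg : univ.filter (fun v => ∃ e, G.r e = v) = univ.image G.r := by
    ext v
    simp
  rw [vOne_eq_sum_fiberSum, himg, sum_image fun a _ b _ hab => hr hab]
  refine sum_congr rfl fun e _ => ?_
  have hfib : univ.filter (fun f => G.r f = G.r e) = {e} := by
    ext f
    simp [hr.eq_iff]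
  rw [fiberSum, nIn, hfib, card_singleton, sum_singleton, Nat.cast_one, inv_one, one_smul]

theorem sum_S_mul_star_S_mul_S (e : G.E) : (∑ g, F.S g * star (F.S g)) * F.S e = F.S e := by
  rw [sum_mul, sum_eq_single_of_mem e (mem_univ e), mul_assoc, F.SS, S_mul_P]
  intro g _ hge
  rw [mul_assoc, F.star_S_mul_S_of_ne hge, mul_zero]

theorem sum_S_mul_star_S_mul_SP {n : ℕ} (μ : GPath G (n + 1)) :
    (∑ g, F.S g * star (F.S g)) * F.SP μ = F.SP μ := by
  rw [SP, List.ofFn_succ, List.prod_cons, ← mul_assoc, sum_S_mul_star_S_mul_S]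

theorem SP_mul_star_SP_mem_centralizer {n : ℕ} (μ ν : GPath G n) :
    F.SP μ * star (F.SP ν) ∈ Set.centralizer {∑ g, F.S g * star (F.S g)} := by
  rintro _ rfl
  cases n with
  | zero => simp [SP]
  | succ n =>
    have hν : star (F.SP ν) * ∑ g, F.S g * star (F.S g) = star (F.SP ν) := by
      simpa [star_mul, star_sum] using congr(star $(F.sum_S_mul_star_S_mul_SP ν))
    rw [← mul_assoc, sum_S_mul_star_S_mul_SP, mul_assoc, hν]

/-- The AF core `F_E`. -/
def core : Set B :=
  closure (Submodule.span ℂ {x : B | ∃ (n : ℕ) (μ ν : GPath G n), x = F.SP μ * star (F.SP ν)})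

theorem S_mul_star_S_mem_core (g h : G.E) : F.S g * star (F.S h) ∈ F.core :=
  subset_closure (Submodule.subset_span ⟨1, .ofEdge g, .ofEdge h, by rw [SP_ofEdge, SP_ofEdge]⟩)

theorem vOne_commute_of_injective (hr : Function.Injective G.r) :
    ∀ x ∈ F.core, F.vOne * x = x * F.vOne := by
  intro x hx
  have hcent := closure_span_subset_centralizer
    (by rintro _ ⟨n, μ, ν, rfl⟩; exact F.SP_mul_star_SP_mem_centralizer μ ν) hx
  rw [F.vOne_eq_sum_S_mul_star_S_of_injective hr]
  exact Set.mem_centralizer_iff.mp hcent _ rfl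

end CKFamily

theorem core_central_projection_iff_r_injective_general {G : FinGraph} {B : Type} [CStarAlgebra B]
    (F : CKFamily G B) :
    (∑ e : G.E, (((Real.sqrt (nIn G (G.r e)) : ℝ) : ℂ))⁻¹ • F.S e) *
        star (∑ e : G.E, (((Real.sqrt (nIn G (G.r e)) : ℝ) : ℂ))⁻¹ • F.S e) =
      ∑ v ∈ Finset.univ.filter (fun v => ∃ e : G.E, G.r e = v),
        ((nIn G v : ℂ))⁻¹ • ∑ e ∈ Finset.univ.filter (fun e => G.r e = v),
          ∑ f ∈ Finset.univ.filter (fun f => G.r f = v), F.S e * star (F.S f) ∧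
    ((∀ x ∈ closure (↑(Submodule.span ℂ
        {x : B | ∃ (n : ℕ) (μ ν : GPath G n), x = F.SP μ * star (F.SP ν)}) : Set B),
        (∑ e : G.E, (((Real.sqrt (nIn G (G.r e)) : ℝ) : ℂ))⁻¹ • F.S e) *
            star (∑ e : G.E, (((Real.sqrt (nIn G (G.r e)) : ℝ) : ℂ))⁻¹ • F.S e) * x =
          x * ((∑ e : G.E, (((Real.sqrt (nIn G (G.r e)) : ℝ) : ℂ))⁻¹ • F.S e) *
            star (∑ e : G.E, (((Real.sqrt (nIn G (G.r e)) : ℝ) : ℂ))⁻¹ • F.S e))) ↔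
      Function.Injective G.r) ∧
    ((∀ x ∈ closure (↑(Submodule.span ℂ
        {x : B | ∃ (n : ℕ) (μ ν : GPath G n), x = F.SP μ * star (F.SP ν)}) : Set B),
        (∑ e : G.E, (((Real.sqrt (nIn G (G.r e)) : ℝ) : ℂ))⁻¹ • F.S e) *
            star (∑ e : G.E, (((Real.sqrt (nIn G (G.r e)) : ℝ) : ℂ))⁻¹ • F.S e) * x =
          x * ((∑ e : G.E, (((Real.sqrt (nIn G (G.r e)) : ℝ) : ℂ))⁻¹ • F.S e) *
            star (∑ e : G.E, (((Real.sqrt (nIn G (G.r e)) : ℝ) : ℂ))⁻¹ • F.S e))) →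
      ∀ g h : G.E, G.r g = G.r h →
        (∑ e ∈ Finset.univ.filter (fun e => G.r e = G.r h), F.S e * star (F.S h)) =
          (∑ f ∈ Finset.univ.filter (fun f => G.r f = G.r h), F.S g * star (F.S f)) ∧
        g = h) := by
  have of_central (hc : ∀ x ∈ F.core, F.vOne * x = x * F.vOne) (g h : G.E)
      (hgh : G.r g = G.r h) :
      (∑ e ∈ univ.filter (fun e => G.r e = G.r h), F.S e * star (F.S h)) =
        (∑ f ∈ univ.filter (fun f => G.r f = G.r h), F.S g * star (F.S f)) ∧ g = h := by
    have heq := F.fiberSum_mul_star_S_eq_of_commute hgh (hc _ (F.S_mul_star_S_mem_core g h))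
    refine ⟨?_, F.eq_of_fiberSum_mul_star_S_eq heq⟩
    simpa only [CKFamily.fiberSum, sum_mul, star_sum, mul_sum] using heq
  exact ⟨F.vOne_eq, ⟨fun hc g h hgh => (of_central hc g h hgh).2,
    F.vOne_commute_of_injective⟩, of_central⟩

/-- For the universal Cuntz–Krieger family of a finite graph `E`, the projection
`V(1) = s s*` (with `s = Σ_e n_{r(e)}^{-1/2} s_e`) equals
`Σ_{v ∈ r(E¹)} (1/n_v) Σ_{e,f ∈ r⁻¹(v)} s_e s_f*`, and it is central in the AF-core
`F_E = span{s_μ s_ν* : |μ| = |ν|}` if and only if `r : E¹ → E⁰` is injective; centrality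
forces, for edges `g, h` with `r(g) = r(h)`, the identity
`Σ_{e ∈ r⁻¹(v)} s_e s_h* = Σ_{f ∈ r⁻¹(v)} s_g s_f*` and hence `g = h`. -/
theorem core_central_projection_iff_r_injective {G : FinGraph} {B : Type} [CStarAlgebra B]
    (F : CKFamily G B)
    (hGen : closure (↑(NonUnitalStarAlgebra.adjoin ℂ
      (Set.range F.P ∪ Set.range F.S)) : Set B) = Set.univ)
    (hUniv : ∀ (C : Type) [CStarAlgebra C] (F' : CKFamily G C),
      ∃ φ : B →⋆ₐ[ℂ] C, (∀ v, φ (F.P v) = F'.P v) ∧ (∀ e, φ (F.S e) = F'.S e)) :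
    (∑ e : G.E, (((Real.sqrt (nIn G (G.r e)) : ℝ) : ℂ))⁻¹ • F.S e) *
        star (∑ e : G.E, (((Real.sqrt (nIn G (G.r e)) : ℝ) : ℂ))⁻¹ • F.S e) =
      ∑ v ∈ Finset.univ.filter (fun v => ∃ e : G.E, G.r e = v),
        ((nIn G v : ℂ))⁻¹ • ∑ e ∈ Finset.univ.filter (fun e => G.r e = v),
          ∑ f ∈ Finset.univ.filter (fun f => G.r f = v), F.S e * star (F.S f) ∧
    ((∀ x ∈ closure (↑(Submodule.span ℂ
        {x : B | ∃ (n : ℕ) (μ ν : GPath G n), x = F.SP μ * star (F.SP ν)}) : Set B),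
        (∑ e : G.E, (((Real.sqrt (nIn G (G.r e)) : ℝ) : ℂ))⁻¹ • F.S e) *
            star (∑ e : G.E, (((Real.sqrt (nIn G (G.r e)) : ℝ) : ℂ))⁻¹ • F.S e) * x =
          x * ((∑ e : G.E, (((Real.sqrt (nIn G (G.r e)) : ℝ) : ℂ))⁻¹ • F.S e) *
            star (∑ e : G.E, (((Real.sqrt (nIn G (G.r e)) : ℝ) : ℂ))⁻¹ • F.S e))) ↔
      Function.Injective G.r) ∧
    ((∀ x ∈ closure (↑(Submodule.span ℂ
        {x : B | ∃ (n : ℕ) (μ ν : GPath G n), x = F.SP μ * star (F.SP ν)}) : Set B),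
        (∑ e : G.E, (((Real.sqrt (nIn G (G.r e)) : ℝ) : ℂ))⁻¹ • F.S e) *
            star (∑ e : G.E, (((Real.sqrt (nIn G (G.r e)) : ℝ) : ℂ))⁻¹ • F.S e) * x =
          x * ((∑ e : G.E, (((Real.sqrt (nIn G (G.r e)) : ℝ) : ℂ))⁻¹ • F.S e) *
            star (∑ e : G.E, (((Real.sqrt (nIn G (G.r e)) : ℝ) : ℂ))⁻¹ • F.S e))) →
      ∀ g h : G.E, G.r g = G.r h →
        (∑ e ∈ Finset.univ.filter (fun e => G.r e = G.r h), F.S e * star (F.S h)) =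
          (∑ f ∈ Finset.univ.filter (fun f => G.r f = G.r h), F.S g * star (F.S f)) ∧
        g = h) :=
  core_central_projection_iff_r_injective_general F
end
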